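/- arXiv:2002.03361 — 4 statements merged into one kernel-verified Lean document; each statement's English description precedes it below -/
import Mathlib

section
/- For any real numbers x > 0 and s > 0, and any integer k ≥ 1, the sum of n^{-s} over positive integers n with exactly k prime factors counted with multiplicity (Ω(n) = k) and largest prime factor at most x equals the sum, over all partitions (n₁, n₂, …) of k (i.e., n₁ + 2n₂ + 3n₃ + ⋯ = k), of the product over j ≥ 1 of (Z(js,x)/j)^{n_j} / n_j!, where Z(t,x) = ∑_{p ≤ x, p prime} p^{-t}. -/
open Filter Real Asymptotics
open scoped Classical Topology BigOperators

/-- The finite set of primes `p ≤ x`, for a real number `x`. -/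
noncomputable def primesUpTo (x : ℝ) : Finset ℕ :=
  (Finset.range (⌊x⌋₊ + 1)).filter Nat.Prime

/-- `n` is `x`-smooth: `n` is a positive integer all of whose prime factors are `≤ x`
(equivalently, `P⁺(n) ≤ x`). -/
def IsSmooth (x : ℝ) (n : ℕ) : Prop := 0 < n ∧ ∀ p ∈ n.primeFactors, (p : ℝ) ≤ x

/-- `Ω n`: number of prime factors of `n` counted with multiplicity. -/
def bigOmega (n : ℕ) : ℕ := n.primeFactorsList.length

/-- Truncated prime zeta function `Z(t, x) = ∑_{p ≤ x} p^{-t}`. -/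
noncomputable def Ztr (t x : ℝ) : ℝ := ∑ p ∈ primesUpTo x, (p : ℝ) ^ (-t)

/-- Prime zeta function `Z(j) = ∑_p p^{-j}`. -/
noncomputable def Zp (j : ℕ) : ℝ := ∑' p : Nat.Primes, (1 : ℝ) / ((p : ℕ) : ℝ) ^ j

/-! Unique factorisation identifies the `x`-smooth `n` with `Ω(n) = k` with the multisets of `k`
primes `≤ x`, so the left side is the complete homogeneous symmetric polynomial `h_k` evaluated
at `(p ^ (-s))_{p ≤ x}`, a point at which the power sums `p_j` take the values `Z(j s, x)`.
The right side is the cycle index of `S_k` evaluated at the `p_j`. Both sequences satisfy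
Newton's recurrence `k a_k = ∑_{j=1}^k p_j a_{k-j}` with `a_0 = 1`, which determines them. -/

open MvPolynomial

def Sym.subReplicateEquiv {α : Type*} [DecidableEq α] (a : α) {j k : ℕ} (h : j ≤ k) :
    {m : Sym α k // j ≤ (m : Multiset α).count a} ≃ Sym α (k - j) where
  toFun m := Sym.mk ((m : Multiset α) - .replicate j a) <| by
    rw [Multiset.card_sub (Multiset.le_count_iff_replicate_le.1 m.2), Multiset.card_replicate,
      Sym.card_coe]
  invFun m := ⟨Sym.cast (Nat.sub_add_cancel h) (m.append (Sym.replicate j a)), by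
    simp [Sym.coe_cast, Sym.coe_append, Sym.coe_replicate]⟩
  left_inv m := Subtype.ext <| Sym.coe_injective <| by
    rw [Sym.coe_cast, Sym.coe_append, Sym.coe_replicate]
    exact tsub_add_cancel_of_le (Multiset.le_count_iff_replicate_le.1 m.2)
  right_inv m := Sym.coe_injective <| by
    simp [Sym.coe_cast, Sym.coe_append, Sym.coe_replicate]

namespace MvPolynomial

variable {σ R : Type*} [Fintype σ] [DecidableEq σ] [CommSemiring R]

theorem X_pow_mul_hsymm_sub (a : σ) {j k : ℕ} (h : j ≤ k) :
    X a ^ j * hsymm σ R (k - j) =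
      ∑ m ∈ Finset.univ.filter fun m : Sym σ k => j ≤ (m : Multiset σ).count a,
        ((m : Multiset σ).map X).prod := by
  rw [Finset.sum_subtype (p := fun m : Sym σ k => j ≤ (m : Multiset σ).count a) _
      (fun m => by simp only [Finset.mem_filter, Finset.mem_univ, true_and]),
    hsymm, Finset.mul_sum]
  refine (Fintype.sum_equiv (Sym.subReplicateEquiv a h) _ _ fun m => ?_).symm
  conv_lhs => rw [← tsub_add_cancel_of_le (Multiset.le_count_iff_replicate_le.1 m.2)]
  simp [Sym.subReplicateEquiv, Multiset.map_replicate, mul_comm]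

/-- Newton's identity for the complete homogeneous symmetric polynomials. -/
theorem natCast_mul_hsymm (k : ℕ) :
    (k : MvPolynomial σ R) * hsymm σ R k =
      ∑ j ∈ Finset.Icc 1 k, psum σ R j * hsymm σ R (k - j) := by
  have sum_Icc_ite (c : ℕ) (hc : c ≤ k) (f : MvPolynomial σ R) :
      ∑ j ∈ Finset.Icc 1 k, (if j ≤ c then f else 0) = c • f := by
    rw [← Finset.sum_filter, Finset.sum_const,
      show {j ∈ Finset.Icc 1 k | j ≤ c} = Finset.Icc 1 c by ext; simp; omega, Nat.card_Icc,
      Nat.add_sub_cancel]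
  calc (k : MvPolynomial σ R) * hsymm σ R k
      = ∑ m : Sym σ k, (∑ a : σ, (m : Multiset σ).count a) •
          ((m : Multiset σ).map X).prod := by
        simp [hsymm, Finset.mul_sum, nsmul_eq_mul]
    _ = ∑ m : Sym σ k, ∑ a : σ, ∑ j ∈ Finset.Icc 1 k,
          if j ≤ (m : Multiset σ).count a then ((m : Multiset σ).map X).prod else 0 := by
        simp only [Finset.sum_smul]
        refine Finset.sum_congr rfl fun m _ => Finset.sum_congr rfl fun a _ => ?_
        rw [sum_Icc_ite _ ((Multiset.count_le_card a m).trans m.card_coe.le)]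
    _ = ∑ a : σ, ∑ j ∈ Finset.Icc 1 k, ∑ m ∈ Finset.univ.filter
          fun m : Sym σ k => j ≤ (m : Multiset σ).count a, ((m : Multiset σ).map X).prod := by
        rw [Finset.sum_comm]
        refine Finset.sum_congr rfl fun a _ => ?_
        simp only [Finset.sum_filter]
        exact Finset.sum_comm
    _ = ∑ j ∈ Finset.Icc 1 k, ∑ a : σ, X a ^ j * hsymm σ R (k - j) := by
        rw [Finset.sum_comm]
        exact Finset.sum_congr rfl fun j hj => Finset.sum_congr rfl fun a _ =>
          (X_pow_mul_hsymm_sub a (Finset.mem_Icc.1 hj).2).symm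
    _ = ∑ j ∈ Finset.Icc 1 k, psum σ R j * hsymm σ R (k - j) := by
        simp [psum, Finset.sum_mul]

end MvPolynomial

section CycleIndex

variable {K : Type*} [Field K] [CharZero K] (q : ℕ → K)

/-- The term `q_λ / z_λ` of a partition `λ`, given by its multiset of parts, where
`z_λ = ∏_j j ^ c_j * c_j !` and `c_j` is the multiplicity of `j` in `λ`. -/
noncomputable def cycleWeight (M : Multiset ℕ) : K :=
  ∏ j ∈ M.toFinset, (q j / j) ^ M.count j / ((M.count j).factorial : K)

/-- The cycle index of the symmetric group `S_k`, evaluated at `q`. -/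
noncomputable def symmCycleIndex (k : ℕ) : K :=
  ∑ P : k.Partition, cycleWeight q P.parts

theorem cycleWeight_eq_prod_of_subset {M : Multiset ℕ} {T : Finset ℕ} (h : M.toFinset ⊆ T) :
    cycleWeight q M = ∏ j ∈ T, (q j / j) ^ M.count j / ((M.count j).factorial : K) :=
  Finset.prod_subset h fun j _ hj => by simp [Multiset.count_eq_zero.2 (by simpa using hj)]

theorem mul_count_mul_cycleWeight_cons {j : ℕ} (hj : j ≠ 0) (M : Multiset ℕ) :
    j * (j ::ₘ M).count j * cycleWeight q (j ::ₘ M) = q j * cycleWeight q M := by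
  set T := (j ::ₘ M).toFinset
  have hjT : j ∈ T := by simp [T]
  have hMT : M.toFinset ⊆ T := by simp [T, Finset.subset_insert]
  rw [cycleWeight_eq_prod_of_subset q hMT, cycleWeight, ← Finset.mul_prod_erase _ _ hjT,
    ← Finset.mul_prod_erase _ _ hjT]
  have hrest : ∀ i ∈ T.erase j, (j ::ₘ M).count i = M.count i := fun i hi =>
    Multiset.count_cons_of_ne (Finset.ne_of_mem_erase hi) M
  rw [Finset.prod_congr rfl fun i hi => by rw [hrest i hi], Multiset.count_cons_self]
  have hj' : (j : K) ≠ 0 := Nat.cast_ne_zero.2 hj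
  simp only [Nat.factorial_succ, Nat.cast_mul, pow_succ]
  field_simp

theorem symmCycleIndex_zero : symmCycleIndex q 0 = 1 := by
  simp [symmCycleIndex, cycleWeight]

theorem sum_mul_count_mul_cycleWeight {j k : ℕ} (hj : 1 ≤ j) (hjk : j ≤ k) :
    ∑ P : k.Partition, j * P.parts.count j * cycleWeight q P.parts =
      q j * symmCycleIndex q (k - j) := by
  rw [← Finset.sum_filter_of_ne (p := fun P : k.Partition => j ∈ P.parts)
      fun P _ hP => by contrapose! hP; simp [Multiset.count_eq_zero.2 hP],
    Finset.sum_subtype _ (p := fun P : k.Partition => j ∈ P.parts) (by simp),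
    symmCycleIndex, Finset.mul_sum]
  refine (Fintype.sum_equiv (Nat.Partition.partitionWithPartEquiv hj hjk).symm _ _
    fun Q => ?_).symm
  rw [Nat.Partition.partitionWithPartEquiv_symm_apply_parts,
    mul_count_mul_cycleWeight_cons q (by omega)]

theorem natCast_mul_symmCycleIndex (k : ℕ) :
    k * symmCycleIndex q k = ∑ j ∈ Finset.Icc 1 k, q j * symmCycleIndex q (k - j) := by
  have sum_parts (P : k.Partition) : ∑ j ∈ Finset.Icc 1 k, (j * P.parts.count j : K) = k := by
    have := Finset.sum_multiset_count_of_subset P.parts (Finset.Icc 1 k) fun i hi => by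
      have := Multiset.mem_toFinset.1 hi
      exact Finset.mem_Icc.2 ⟨P.parts_pos this, Nat.Partition.le_of_mem_parts this⟩
    rw [P.parts_sum] at this
    exact_mod_cast (by simpa [mul_comm] using this.symm)
  calc (k : K) * symmCycleIndex q k
      = ∑ P : k.Partition, ∑ j ∈ Finset.Icc 1 k,
          j * P.parts.count j * cycleWeight q P.parts := by
        simp only [symmCycleIndex, Finset.mul_sum, ← Finset.sum_mul, sum_parts]
    _ = ∑ j ∈ Finset.Icc 1 k, q j * symmCycleIndex q (k - j) := by
        rw [Finset.sum_comm]
        exact Finset.sum_congr rfl fun j hj => sum_mul_count_mul_cycleWeight q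
          (Finset.mem_Icc.1 hj).1 (Finset.mem_Icc.1 hj).2

theorem eq_symmCycleIndex_of_natCast_mul {a : ℕ → K} (h0 : a 0 = 1)
    (h : ∀ k, k * a k = ∑ j ∈ Finset.Icc 1 k, q j * a (k - j)) (k : ℕ) :
    a k = symmCycleIndex q k := by
  induction k using Nat.strong_induction_on with
  | _ k ih =>
    rcases k with _ | k
    · rw [h0, symmCycleIndex_zero]
    · refine mul_left_cancel₀ (Nat.cast_ne_zero.2 k.succ_ne_zero) ?_
      rw [h, natCast_mul_symmCycleIndex]
      exact Finset.sum_congr rfl fun j hj => by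
        rw [ih _ (by have := (Finset.mem_Icc.1 hj).1; omega)]

end CycleIndex

theorem MvPolynomial.eval_hsymm_eq_symmCycleIndex {σ K : Type*} [Fintype σ] [DecidableEq σ]
    [Field K] [CharZero K] (w : σ → K) (k : ℕ) :
    eval w (hsymm σ K k) = symmCycleIndex (fun j => eval w (psum σ K j)) k :=
  eq_symmCycleIndex_of_natCast_mul _ (a := fun k => eval w (hsymm σ K k)) (by simp)
    (fun k => by simpa using congrArg (eval w) (natCast_mul_hsymm k)) k

theorem Nat.coe_primeFactorsList_multiset_prod {m : Multiset ℕ} (h : ∀ p ∈ m, p.Prime) :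
    (m.prod.primeFactorsList : Multiset ℕ) = m := by
  rw [← Nat.factors_eq,
    UniqueFactorizationMonoid.normalizedFactors_prod_of_prime fun p hp => (h p hp).prime]

section PrimeProducts

variable {S : Finset ℕ} {k : ℕ}

def symProd (m : Sym S k) : ℕ := ((m : Multiset S).map Subtype.val).prod

theorem coe_primeFactorsList_symProd (hS : ∀ p ∈ S, p.Prime) (m : Sym S k) :
    ((symProd m).primeFactorsList : Multiset ℕ) = (m : Multiset S).map Subtype.val :=
  Nat.coe_primeFactorsList_multiset_prod <| by
    simp only [Multiset.mem_map]
    rintro _ ⟨p, -, rfl⟩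
    exact hS p p.2

theorem symProd_injective (hS : ∀ p ∈ S, p.Prime) :
    Function.Injective (symProd (S := S) (k := k)) :=
  fun m m' h => Sym.coe_injective <| Multiset.map_injective Subtype.val_injective <| by
    rw [← coe_primeFactorsList_symProd hS, ← coe_primeFactorsList_symProd hS, h]

theorem mem_range_symProd_iff (hS : ∀ p ∈ S, p.Prime) {n : ℕ} :
    n ∈ Set.range (symProd (S := S) (k := k)) ↔
      n ≠ 0 ∧ n.primeFactors ⊆ S ∧ n.primeFactorsList.length = k := by
  constructor
  · rintro ⟨m, rfl⟩
    have hfac := coe_primeFactorsList_symProd hS m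
    refine ⟨?_, fun p hp => ?_, ?_⟩
    · refine Multiset.prod_ne_zero fun h0 => ?_
      obtain ⟨p, -, hp⟩ := Multiset.mem_map.1 h0
      exact (hS p p.2).ne_zero hp
    · rw [Nat.mem_primeFactors_iff_mem_primeFactorsList, ← Multiset.mem_coe, hfac] at hp
      obtain ⟨p, -, rfl⟩ := Multiset.mem_map.1 hp
      exact p.2
    · rw [← Multiset.coe_card, hfac, Multiset.card_map, Sym.card_coe]
  · rintro ⟨hn, hsub, hk⟩
    have hmem : ∀ p ∈ (n.primeFactorsList : Multiset ℕ), p ∈ S := fun p hp =>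
      hsub (Nat.mem_primeFactors_iff_mem_primeFactorsList.2 (Multiset.mem_coe.1 hp))
    obtain ⟨m, hm⟩ : ∃ m : Multiset S, m.map Subtype.val = n.primeFactorsList :=
      CanLift.prf _ hmem
    refine ⟨Sym.mk m (by rw [← Multiset.card_map Subtype.val, hm, Multiset.coe_card, hk]), ?_⟩
    rw [symProd, Sym.coe_mk, hm, Multiset.prod_coe, Nat.prod_primeFactorsList hn]

end PrimeProducts

theorem mem_primesUpTo {x : ℝ} {p : ℕ} :
    p ∈ primesUpTo x ↔ p.Prime ∧ (p : ℝ) ≤ x := by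
  rw [primesUpTo, Finset.mem_filter, Finset.mem_range, Nat.lt_succ_iff, and_comm]
  exact and_congr_right fun hp => Nat.le_floor_iff' hp.ne_zero

theorem isSmooth_and_bigOmega_iff {x : ℝ} {k n : ℕ} :
    IsSmooth x n ∧ bigOmega n = k ↔
      n ≠ 0 ∧ n.primeFactors ⊆ primesUpTo x ∧ n.primeFactorsList.length = k := by
  simp only [IsSmooth, bigOmega, Nat.pos_iff_ne_zero, and_assoc]
  refine and_congr_right fun _ => and_congr_left fun _ => forall₂_congr fun p hp => ?_
  rw [mem_primesUpTo, and_iff_right (Nat.prime_of_mem_primeFactors hp)]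

theorem tsum_isSmooth_bigOmega_rpow (x s : ℝ) (k : ℕ) :
    (∑' n : ℕ, if IsSmooth x n ∧ bigOmega n = k then (n : ℝ) ^ (-s) else 0) =
      eval (fun p : primesUpTo x => (p : ℝ) ^ (-s)) (hsymm (primesUpTo x) ℝ k) := by
  have hS : ∀ p ∈ primesUpTo x, p.Prime := fun p hp => (mem_primesUpTo.1 hp).1
  simp_rw [isSmooth_and_bigOmega_iff, ← mem_range_symProd_iff hS]
  rw [← (symProd_injective hS).tsum_eq fun n hn => by_contra fun h => hn (if_neg h),
    tsum_fintype, hsymm, map_sum]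
  refine Finset.sum_congr rfl fun m _ => ?_
  rw [if_pos ⟨m, rfl⟩, symProd, Nat.cast_multiset_prod,
    ← Real.multiset_prod_map_rpow _ _ (by simp), map_multiset_prod, Multiset.map_map,
    Multiset.map_map]
  simp

theorem Ztr_natCast_mul_eq_eval_psum (x s : ℝ) (j : ℕ) :
    Ztr (j * s) x =
      eval (fun p : primesUpTo x => (p : ℝ) ^ (-s)) (psum (primesUpTo x) ℝ j) := by
  rw [Ztr, psum, map_sum, ← Finset.sum_coe_sort]
  refine Finset.sum_congr rfl fun p _ => ?_
  rw [map_pow, eval_X, ← Real.rpow_mul_natCast (Nat.cast_nonneg _)]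
  ring_nf

theorem smooth_kfold_sum_eq_partition_sum_general (x s : ℝ) (k : ℕ) :
    (∑' n : ℕ, if IsSmooth x n ∧ bigOmega n = k then ((n : ℝ)) ^ (-s) else 0)
      = ∑ P : Nat.Partition k, ∏ j ∈ P.parts.toFinset,
          (Ztr ((j : ℝ) * s) x / (j : ℝ)) ^ (P.parts.count j)
            / (Nat.factorial (P.parts.count j)) := by
  rw [tsum_isSmooth_bigOmega_rpow, eval_hsymm_eq_symmCycleIndex]
  simp only [← Ztr_natCast_mul_eq_eval_psum]
  rfl

theorem smooth_kfold_sum_eq_partition_sum (x s : ℝ) (hx : 0 < x) (hs : 0 < s)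
    (k : ℕ) (hk : 1 ≤ k) :
    (∑' n : ℕ, if IsSmooth x n ∧ bigOmega n = k then ((n : ℝ)) ^ (-s) else 0)
      = ∑ P : Nat.Partition k, ∏ j ∈ P.parts.toFinset,
          (Ztr ((j : ℝ) * s) x / (j : ℝ)) ^ (P.parts.count j)
            / (Nat.factorial (P.parts.count j)) :=
  smooth_kfold_sum_eq_partition_sum_general x s k
end

section
/- With c_k defined by c₀ = 1 and c_k = (1/k) ∑_{j=2}^{k} c_{k-j} Z(j) for k ≥ 1 (where Z(j) = ∑_p p^{-j}), the series ∑_{k≥0} c_k converges and equals exp(∑_{j≥2} Z(j)/j) = e^{γ - β}, where γ is the Euler–Mascheroni constant and β is Mertens' constant. -/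
open Filter Real Asymptotics
open scoped Classical Topology BigOperators

/-!
Write `a₀ = 0`, `aⱼ = Z(j + 1)` for `j ≥ 1`. The recurrence reads `(k + 1) c_{k+1} = ∑_{j ≤ k} aⱼ c_{k-j}`,
i.e. `S' = G S` for `S(x) = ∑ c_k x^k` and `G(x) = ∑ aⱼ x^j = F'(x)`, where
`F(x) = ∑_{j ≥ 2} Z(j) x^j / j`. Since `Z(j + 2) ≤ Z(2) / 2^j`, `∑ aⱼ r^j` converges for `r < 2`,
and weighting the recurrence by `k` shows that `∑ c_k r^k` converges too. So `S e^{-F}` is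
constant on `(-r, r)` for `r = 3/2`, whence `∑ c_k = S(1) = e^{F(1)}`. Finally
`F(1) = ∑_p (-log(1 - 1/p) - 1/p) = γ - β`, expanding each logarithm and swapping the two sums of
nonnegative terms.
-/

open Finset

section ConvolutionRecurrence

variable {α d : ℕ → ℝ}

lemma sum_range_mul_le_tsum_mul_sum_range (hα : ∀ j, 0 ≤ α j) (hαs : Summable α)
    (hd : ∀ k, 0 ≤ d k)
    (h : ∀ k : ℕ, ((k : ℝ) + 1) * d (k + 1) ≤ ∑ j ∈ range (k + 1), α j * d (k - j)) (N : ℕ) :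
    ∑ k ∈ range (N + 1), (k : ℝ) * d k ≤ (∑' j, α j) * ∑ k ∈ range N, d k :=
  calc ∑ k ∈ range (N + 1), (k : ℝ) * d k = ∑ k ∈ range N, (k + 1 : ℝ) * d (k + 1) := by
        simp [sum_range_succ']
    _ ≤ ∑ k ∈ range N, ∑ j ∈ range (k + 1), α j * d (k - j) := sum_le_sum fun k _ => h k
    _ = ∑ j ∈ range N, α j * ∑ k ∈ range (N - j), d k := by
        rw [sum_range_diag_flip N fun j m => α j * d m]; simp only [mul_sum]
    _ ≤ ∑ j ∈ range N, α j * ∑ k ∈ range N, d k := by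
        gcongr with j
        · exact hα j
        · exact fun k _ _ => hd k
        · exact Nat.sub_le N j
    _ ≤ (∑' j, α j) * ∑ k ∈ range N, d k := by
        rw [← sum_mul]
        gcongr
        · exact sum_nonneg fun k _ => hd k
        · exact hαs.sum_le_tsum _ fun j _ => hα j

/- Since `∑_{k ≤ N} k d_k ≤ A ∑_{k < N} d_k` with `A = ∑ α`, the terms with `k > A` carry at most
`⌈A⌉ + 1` times the mass of the first `⌈A⌉ + 1` terms. -/
theorem summable_of_succ_mul_le_sum_range_mul (hα : ∀ j, 0 ≤ α j) (hαs : Summable α)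
    (hd : ∀ k, 0 ≤ d k)
    (h : ∀ k : ℕ, ((k : ℝ) + 1) * d (k + 1) ≤ ∑ j ∈ range (k + 1), α j * d (k - j)) :
    Summable d := by
  obtain ⟨K, hK⟩ := exists_nat_ge (∑' j, α j)
  refine summable_of_sum_range_le hd (c := (K + 1) * ∑ k ∈ range (K + 1), d k) fun N => ?_
  have hterm (k : ℕ) :
      (K + 1 : ℝ) * d k ≤ k * d k + (K + 1) * if k ∈ range (K + 1) then d k else 0 := by
    split_ifs with hk
    · nlinarith [hd k, (Nat.cast_nonneg k : (0 : ℝ) ≤ k)]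
    · have : (K + 1 : ℝ) ≤ k := by
        exact_mod_cast not_lt.mp (mem_range.not.mp hk)
      nlinarith [hd k]
  have hlow : (K + 1 : ℝ) * ∑ k ∈ range (N + 1), d k
      ≤ ∑ k ∈ range (N + 1), (k : ℝ) * d k + (K + 1) * ∑ k ∈ range (K + 1), d k := by
    calc (K + 1 : ℝ) * ∑ k ∈ range (N + 1), d k
        ≤ ∑ k ∈ range (N + 1), ((k : ℝ) * d k + (K + 1) * if k ∈ range (K + 1) then d k else 0) := by
          rw [mul_sum]; exact sum_le_sum fun k _ => hterm k
      _ ≤ _ := by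
          rw [sum_add_distrib, ← mul_sum, sum_ite_mem]
          gcongr
          · exact fun k _ _ => hd k
          · exact inter_subset_right
  have hmono : ∑ k ∈ range N, d k ≤ ∑ k ∈ range (N + 1), d k := by
    rw [sum_range_succ]; linarith [hd N]
  have hN : 0 ≤ ∑ k ∈ range N, d k := sum_nonneg fun k _ => hd k
  have hup := sum_range_mul_le_tsum_mul_sum_range hα hαs hd h N
  have : (∑' j, α j) * ∑ k ∈ range N, d k ≤ K * ∑ k ∈ range (N + 1), d k :=
    mul_le_mul hK hmono hN (Nat.cast_nonneg K)
  linarith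

end ConvolutionRecurrence

lemma norm_mul_pow_le {b x r : ℝ} (hb : 0 ≤ b) (hx : |x| ≤ r) (n : ℕ) :
    ‖b * x ^ n‖ ≤ b * r ^ n := by
  rw [norm_mul, norm_pow, Real.norm_of_nonneg hb, Real.norm_eq_abs]
  exact mul_le_mul_of_nonneg_left (pow_le_pow_left₀ (abs_nonneg x) hx n) hb

section PowerSeries

variable {a c : ℕ → ℝ} {r : ℝ}

lemma hasSum_sum_range_mul_mul_pow (ha : ∀ j, 0 ≤ a j) (hc : ∀ k, 0 ≤ c k)
    (has : Summable fun j => a j * r ^ j) (hcs : Summable fun k => c k * r ^ k) {x : ℝ}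
    (hx : |x| ≤ r) :
    HasSum (fun k => (∑ j ∈ range (k + 1), a j * c (k - j)) * x ^ k)
      ((∑' j, a j * x ^ j) * ∑' k, c k * x ^ k) := by
  have h := hasSum_sum_range_mul_of_summable_norm
    (has.of_nonneg_of_le (fun _ => norm_nonneg _) fun j => norm_mul_pow_le (ha j) hx j)
    (hcs.of_nonneg_of_le (fun _ => norm_nonneg _) fun k => norm_mul_pow_le (hc k) hx k)
  refine h.congr_fun fun k => ?_
  rw [sum_mul]
  refine sum_congr rfl fun j hj => ?_
  rw [← pow_mul_pow_sub x (Nat.lt_succ_iff.mp (mem_range.mp hj))]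
  ring

lemma hasDerivAt_tsum_mul_pow_succ_div (ha : ∀ j, 0 ≤ a j)
    (has : Summable fun j => a j * r ^ j) {x : ℝ} (hx : x ∈ Set.Ioo (-r) r) :
    HasDerivAt (fun y => ∑' j, a j / (j + 1) * y ^ (j + 1)) (∑' j, a j * x ^ j) x := by
  refine hasDerivAt_tsum_of_isPreconnected has isOpen_Ioo isPreconnected_Ioo
    (fun j y _ => ?_) (fun j y hy => norm_mul_pow_le (ha j) (abs_lt.mpr hy).le j)
    (show (0 : ℝ) ∈ Set.Ioo (-r) r by constructor <;> linarith [hx.1, hx.2])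
    (by simp) hx
  refine ((hasDerivAt_pow (j + 1) y).const_mul (a j / (j + 1))).congr_deriv ?_
  push_cast
  field_simp

lemma hasDerivAt_tsum_mul_pow (hc : ∀ k, 0 ≤ c k)
    (hcs : Summable fun k : ℕ => ((k : ℝ) + 1) * c (k + 1) * r ^ k) {x : ℝ}
    (hx : x ∈ Set.Ioo (-r) r) :
    HasDerivAt (fun y => ∑' k, c k * y ^ k) (∑' k : ℕ, ((k : ℝ) + 1) * c (k + 1) * x ^ k) x := by
  have hu : Summable fun k : ℕ => (k : ℝ) * c k * r ^ (k - 1) :=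
    (summable_nat_add_iff 1).mp (by simpa using hcs)
  have hbound : ∀ (k : ℕ), ∀ y ∈ Set.Ioo (-r) r,
      ‖c k * (k * y ^ (k - 1))‖ ≤ k * c k * r ^ (k - 1) := fun k y hy => by
    simpa [mul_assoc, mul_left_comm] using
      norm_mul_pow_le (mul_nonneg (Nat.cast_nonneg k) (hc k)) (abs_lt.mpr hy).le (k - 1)
  have h := hasDerivAt_tsum_of_isPreconnected hu isOpen_Ioo isPreconnected_Ioo
    (fun k y _ => ((hasDerivAt_pow k y).const_mul (c k))) hbound
    (show (0 : ℝ) ∈ Set.Ioo (-r) r by constructor <;> linarith [hx.1, hx.2])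
    (summable_of_ne_finset_zero (s := {0}) fun k hk => by simp_all) hx
  refine h.congr_deriv ?_
  rw [tsum_eq_zero_add' ((summable_nat_add_iff 1).mpr (hu.of_norm_bounded (hbound · x hx)))]
  simp [mul_left_comm, mul_assoc]

lemma nonneg_of_succ_mul_eq_sum_range_mul (ha : ∀ j, 0 ≤ a j) (hc0 : c 0 = 1)
    (hrec : ∀ k : ℕ, ((k : ℝ) + 1) * c (k + 1) = ∑ j ∈ range (k + 1), a j * c (k - j)) (k : ℕ) :
    0 ≤ c k := by
  induction k using Nat.strong_induction_on with
  | _ k ih =>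
    rcases k with _ | k
    · simp [hc0]
    · refine nonneg_of_mul_nonneg_right ?_ (Nat.cast_add_one_pos k)
      rw [hrec k]
      exact sum_nonneg fun j hj => mul_nonneg (ha j) (ih _ (by omega))

lemma summable_mul_pow_of_succ_mul_eq_sum_range_mul (ha : ∀ j, 0 ≤ a j) (hc : ∀ k, 0 ≤ c k)
    (hr : 0 ≤ r) (has : Summable fun j => a j * r ^ j)
    (hrec : ∀ k : ℕ, ((k : ℝ) + 1) * c (k + 1) = ∑ j ∈ range (k + 1), a j * c (k - j)) :
    Summable fun k => c k * r ^ k := by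
  refine summable_of_succ_mul_le_sum_range_mul (α := fun j => r * (a j * r ^ j))
    (fun j => by have := ha j; positivity) (has.mul_left r)
    (fun k => by have := hc k; positivity) fun k => ?_
  rw [← mul_assoc, hrec k, sum_mul]
  refine (sum_congr rfl fun j hj => ?_).le
  rw [pow_succ, ← pow_mul_pow_sub r (Nat.lt_succ_iff.mp (mem_range.mp hj))]
  ring

theorem hasSum_exp_of_succ_mul_eq_sum_range_mul (ha : ∀ j, 0 ≤ a j) (hr : 1 < r)
    (has : Summable fun j => a j * r ^ j) (hc0 : c 0 = 1)
    (hrec : ∀ k : ℕ, ((k : ℝ) + 1) * c (k + 1) = ∑ j ∈ range (k + 1), a j * c (k - j)) :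
    HasSum c (exp (∑' j : ℕ, a j / (j + 1))) := by
  have hc := nonneg_of_succ_mul_eq_sum_range_mul ha hc0 hrec
  have hr0 : 0 < r := by linarith
  have hcs := summable_mul_pow_of_succ_mul_eq_sum_range_mul ha hc hr0.le has hrec
  have hcauchy : ∀ x, |x| ≤ r → HasSum (fun k : ℕ => ((k : ℝ) + 1) * c (k + 1) * x ^ k)
      ((∑' j, a j * x ^ j) * ∑' k, c k * x ^ k) := fun x hx => by
    simpa only [hrec] using hasSum_sum_range_mul_mul_pow ha hc has hcs hx
  set S : ℝ → ℝ := fun y => ∑' k, c k * y ^ k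
  set F : ℝ → ℝ := fun y => ∑' j : ℕ, a j / (j + 1) * y ^ (j + 1)
  have hderiv : ∀ x ∈ Set.Ioo (-r) r, HasDerivAt (fun y => S y * exp (-F y)) 0 x := by
    intro x hx
    have hS := hasDerivAt_tsum_mul_pow hc (hcauchy r (abs_of_pos hr0).le).summable hx
    rw [(hcauchy x (abs_lt.mpr hx).le).tsum_eq] at hS
    refine (hS.mul (hasDerivAt_tsum_mul_pow_succ_div ha has hx).neg.exp).congr_deriv ?_
    ring
  have hconst : S 1 * exp (-F 1) = S 0 * exp (-F 0) :=
    isOpen_Ioo.is_const_of_deriv_eq_zero isPreconnected_Ioo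
      (fun x hx => (hderiv x hx).differentiableAt.differentiableWithinAt)
      (fun x hx => (hderiv x hx).deriv) ⟨by linarith, hr⟩ ⟨by linarith, hr0⟩
  have hS0 : S 0 = 1 := by simp [S, zero_pow_eq, hc0]
  have hF0 : F 0 = 0 := by simp [F]
  have hsum : HasSum c (S 1) := by
    simpa [S] using (hcs.of_nonneg_of_le hc fun k =>
      le_mul_of_one_le_right (hc k) (one_le_pow₀ hr.le)).hasSum
  have hF1 : F 1 = ∑' j : ℕ, a j / (j + 1) := by simp [F]
  have hS1 : S 1 = exp (F 1) := by
    rwa [hS0, hF0, neg_zero, exp_zero, mul_one, exp_neg, mul_inv_eq_one₀ (exp_ne_zero _)] at hconst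
  rw [← hF1, ← hS1]
  exact hsum

end PowerSeries

lemma hasSum_pow_add_two_div {x : ℝ} (hx : |x| < 1) :
    HasSum (fun n : ℕ => x ^ (n + 2) / (n + 2)) (-(log (1 - x) + x)) := by
  have h := (hasSum_nat_add_iff' 1).mpr (hasSum_pow_div_log_of_abs_lt_one hx)
  rw [sum_range_one] at h
  push_cast at h
  rw [show -(log (1 - x) + x) = -log (1 - x) - x ^ 1 / (0 + 1) by ring]
  exact h.congr_fun fun n => by ring_nf

section PrimeZeta

lemma summable_one_div_prime_pow {j : ℕ} (hj : 2 ≤ j) :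
    Summable fun p : Nat.Primes => (1 : ℝ) / ((p : ℕ) : ℝ) ^ j :=
  (Real.summable_one_div_nat_pow.mpr hj).subtype {p | p.Prime}

lemma Zp_nonneg (j : ℕ) : 0 ≤ Zp j :=
  tsum_nonneg fun _ => by positivity

lemma Zp_add_two_le (j : ℕ) : Zp (j + 2) ≤ Zp 2 / 2 ^ j := by
  rw [Zp, Zp, ← tsum_div_const]
  refine (summable_one_div_prime_pow (by omega)).tsum_le_tsum (fun p => ?_)
    ((summable_one_div_prime_pow le_rfl).div_const _)
  have hp : (2 : ℝ) ≤ ((p : ℕ) : ℝ) := by exact_mod_cast p.2.two_le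
  rw [div_div, pow_add, mul_comm]
  gcongr

lemma summable_Zp_add_two_mul_pow {x : ℝ} (hx : |x| < 2) :
    Summable fun j => Zp (j + 2) * x ^ j := by
  refine .of_norm_bounded ((summable_geometric_of_lt_one (by positivity) (by linarith :
    |x| / 2 < 1)).mul_left (Zp 2)) fun j => ?_
  rw [norm_mul, norm_pow, Real.norm_of_nonneg (Zp_nonneg _), Real.norm_eq_abs, div_pow,
    mul_div_assoc', mul_div_right_comm]
  gcongr
  exact Zp_add_two_le j

lemma summable_Zp_add_two_div : Summable fun j : ℕ => Zp (j + 2) / ((j : ℝ) + 2) :=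
  (summable_Zp_add_two_mul_pow (x := 1) (by norm_num)).of_nonneg_of_le
    (fun j => div_nonneg (Zp_nonneg _) (by positivity))
    fun j => by simpa using div_le_self (Zp_nonneg (j + 2)) (by linarith [j.cast_nonneg (α := ℝ)])

noncomputable def zpCoeff (j : ℕ) : ℝ := if j = 0 then 0 else Zp (j + 1)

lemma zpCoeff_nonneg (j : ℕ) : 0 ≤ zpCoeff j := by
  unfold zpCoeff; split_ifs
  · exact le_rfl
  · exact Zp_nonneg _

lemma summable_zpCoeff_mul_pow : Summable fun j => zpCoeff j * (3 / 2 : ℝ) ^ j := by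
  refine (summable_nat_add_iff 1).mp ?_
  simpa [zpCoeff, pow_succ, ← mul_assoc] using
    (summable_Zp_add_two_mul_pow (x := 3 / 2) (by norm_num [abs_of_pos])).mul_right (3 / 2)

lemma tsum_zpCoeff_div_succ :
    ∑' j : ℕ, zpCoeff j / (j + 1) = ∑' j : ℕ, Zp (j + 2) / ((j : ℝ) + 2) := by
  rw [tsum_eq_zero_add']
  · simp [zpCoeff, add_assoc, one_add_one_eq_two]
  · simpa [zpCoeff, add_assoc, one_add_one_eq_two] using summable_Zp_add_two_div

lemma succ_mul_eq_sum_range_zpCoeff_mul {c : ℕ → ℝ}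
    (hc : ∀ k, 1 ≤ k → c k = (1 / (k : ℝ)) * ∑ j ∈ Finset.Icc 2 k, c (k - j) * Zp j) (k : ℕ) :
    ((k : ℝ) + 1) * c (k + 1) = ∑ j ∈ range (k + 1), zpCoeff j * c (k - j) := by
  rw [hc (k + 1) (by omega), ← mul_assoc, Nat.cast_add_one, mul_one_div_cancel (by positivity),
    one_mul, sum_range_succ', ← Ico_add_one_right_eq_Icc, sum_Ico_eq_sum_range]
  simp only [zpCoeff, Nat.add_eq_zero_iff, one_ne_zero, and_false, if_false, if_true, zero_mul,
    add_zero]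
  refine sum_congr rfl fun i _ => ?_
  rw [show k + 1 - (2 + i) = k - (i + 1) by omega, add_comm 2 i, mul_comm]

lemma tsum_log_one_sub_inv_add_inv :
    ∑' p : Nat.Primes, (log (1 - 1 / ((p : ℕ) : ℝ)) + 1 / ((p : ℕ) : ℝ))
      = -∑' j : ℕ, Zp (j + 2) / ((j : ℝ) + 2) := by
  set f : ℕ → Nat.Primes → ℝ := fun j p => 1 / ((p : ℕ) : ℝ) ^ (j + 2) / ((j : ℝ) + 2)
  have hrow (j : ℕ) : HasSum (f j) (Zp (j + 2) / ((j : ℝ) + 2)) :=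
    (summable_one_div_prime_pow (by omega)).hasSum.div_const _
  have hcol (p : Nat.Primes) :
      HasSum (fun j => f j p) (-(log (1 - 1 / ((p : ℕ) : ℝ)) + 1 / ((p : ℕ) : ℝ))) := by
    have hp : (2 : ℝ) ≤ ((p : ℕ) : ℝ) := by exact_mod_cast p.2.two_le
    have hx : |1 / ((p : ℕ) : ℝ)| < 1 := by
      rw [abs_of_pos (by positivity), div_lt_one (by positivity)]; linarith
    simpa [f, one_div_pow] using hasSum_pow_add_two_div hx
  have hf : Summable (Function.uncurry f) :=
    (summable_prod_of_nonneg fun _ => by simp only [Function.uncurry, f]; positivity).mpr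
      ⟨fun j => (hrow j).summable, by simpa [(hrow _).tsum_eq] using summable_Zp_add_two_div⟩
  calc ∑' p : Nat.Primes, (log (1 - 1 / ((p : ℕ) : ℝ)) + 1 / ((p : ℕ) : ℝ))
      = -∑' (p : Nat.Primes) (j : ℕ), f j p := by
        rw [← tsum_neg]; exact tsum_congr fun p => by rw [(hcol p).tsum_eq, neg_neg]
    _ = -∑' j : ℕ, Zp (j + 2) / ((j : ℝ) + 2) := by
        rw [hf.tsum_comm]; exact congrArg _ (tsum_congr fun j => (hrow j).tsum_eq)

end PrimeZeta

theorem sum_ck_eq (c : ℕ → ℝ) (hc0 : c 0 = 1)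
    (hc : ∀ k, 1 ≤ k → c k = (1 / (k : ℝ)) * ∑ j ∈ Finset.Icc 2 k, c (k - j) * Zp j)
    (β : ℝ)
    (hβ : β = Real.eulerMascheroniConstant
        + ∑' p : Nat.Primes, (Real.log (1 - 1 / ((p : ℕ) : ℝ)) + 1 / ((p : ℕ) : ℝ))) :
    Summable c
    ∧ ∑' k : ℕ, c k = Real.exp (∑' j : ℕ, Zp (j + 2) / ((j : ℝ) + 2))
    ∧ ∑' k : ℕ, c k = Real.exp (Real.eulerMascheroniConstant - β) := by
  have hsum := hasSum_exp_of_succ_mul_eq_sum_range_mul zpCoeff_nonneg (by norm_num)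
    summable_zpCoeff_mul_pow hc0 (succ_mul_eq_sum_range_zpCoeff_mul hc)
  rw [tsum_zpCoeff_div_succ] at hsum
  refine ⟨hsum.summable, hsum.tsum_eq, ?_⟩
  rw [hsum.tsum_eq, hβ, tsum_log_one_sub_inv_add_inv, sub_add_cancel_left, neg_neg]
end

section
/- Define sequences c_{k,q} for primes q by: c_{k,2} = c_k (where c₀=1, c_k = (1/k)∑_{j=2}^k c_{k-j}Z(j)), and for consecutive primes p < q, c_{0,q} = 1 and c_{k,q} = c_{k,p} - p^{-1} c_{k-1,p} for k ≥ 1. Define A_{k,q} similarly with A_{k,2} = Z(k) for k≥2, A_{1,2}=0, and A_{k,q} = A_{k,p} - p^{-k}. Then for every prime q and every k ≥ 1, k·c_{k,q} = ∑_{j=1}^{k} c_{k-j,q} A_{j,q}. -/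
open Filter Real Asymptotics
open scoped Classical Topology BigOperators

/-! In generating functions, `k c_k = ∑_{j=1}^k c_{k-j} A_j` says `x C'(x) = C(x) A(x)` with
`A(x) = ∑_{j ≥ 1} A_j x^j`, i.e. `A` is the logarithmic derivative `x C'/C`. Passing from `p` to
the next prime multiplies `C` by `1 - x/p`, which changes `x C'/C` by `-(x/p)/(1 - x/p)
= -∑_{j ≥ 1} (x/p)^j`, exactly the change prescribed for `A`. At `q = 2` the identity is the
recursion defining `c_k`, since `A_{1,2} = 0`. -/

def NewtonRecursion {R : Type*} [CommRing R] (c a : ℕ → R) : Prop :=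
  ∀ k : ℕ, 1 ≤ k → (k : R) * c k = ∑ j ∈ Finset.Icc 1 k, c (k - j) * a j

theorem sum_Icc_one_succ_eq_sum_range {M : Type*} [AddCommMonoid M] (f : ℕ → M) (n : ℕ) :
    ∑ j ∈ Finset.Icc 1 (n + 1), f j = ∑ i ∈ Finset.range (n + 1), f (i + 1) := by
  rw [← Finset.Ico_add_one_right_eq_Icc, Finset.sum_Ico_eq_sum_range]
  simp only [Nat.add_sub_cancel, add_comm 1]

section
open PowerSeries
variable {R : Type*} [CommRing R]

theorem newtonRecursion_iff {c a : ℕ → R} :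
    NewtonRecursion c a ↔
      X * d⁄dX R (PowerSeries.mk c) = PowerSeries.mk c * (X * PowerSeries.mk fun j => a (j + 1)) := by
  have hcoeff (n : ℕ) : coeff n (PowerSeries.mk c * PowerSeries.mk fun j => a (j + 1)) =
      ∑ j ∈ Finset.Icc 1 (n + 1), c (n + 1 - j) * a j := by
    rw [coeff_mul, ← Finset.Nat.sum_antidiagonal_swap,
      Finset.Nat.sum_antidiagonal_eq_sum_range_succ_mk, sum_Icc_one_succ_eq_sum_range]
    simp [Nat.add_sub_add_right]
  rw [mul_left_comm, PowerSeries.ext_iff, NewtonRecursion]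
  constructor
  · rintro h (_ | n)
    · simp
    · rw [coeff_succ_X_mul, coeff_succ_X_mul, coeff_derivative, hcoeff, ← h (n + 1) n.succ_pos]
      simp [mul_comm]
  · intro h k hk
    obtain ⟨n, rfl⟩ := Nat.exists_eq_add_of_le' hk
    have := h (n + 1)
    rw [coeff_succ_X_mul, coeff_succ_X_mul, coeff_derivative, hcoeff] at this
    rw [← this]
    simp [mul_comm]

theorem one_sub_C_mul_X_mul_mk_pow_succ (u : R) :
    (1 - C u * X) * PowerSeries.mk (fun j => u ^ (j + 1)) = C u := by
  ext (_ | n)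
  · simp
  · simp [sub_mul, mul_assoc, coeff_succ_X_mul, pow_succ']

theorem NewtonRecursion.step {c a c' a' : ℕ → R} (u : R) (h : NewtonRecursion c a)
    (hc0 : c' 0 = c 0) (hc : ∀ m, 1 ≤ m → c' m = c m - u * c (m - 1))
    (ha : ∀ j, 1 ≤ j → a' j = a j - u ^ j) : NewtonRecursion c' a' := by
  have hC : PowerSeries.mk c' = (1 - C u * X) * PowerSeries.mk c := by
    ext (_ | n)
    · simp [hc0]
    · simp [sub_mul, mul_assoc, coeff_succ_X_mul, hc]
  have hA : (PowerSeries.mk fun j => a' (j + 1)) =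
      (PowerSeries.mk fun j => a (j + 1)) - PowerSeries.mk fun j => u ^ (j + 1) := by
    ext n
    simp [ha]
  have hD : d⁄dX R (PowerSeries.mk c') =
      (1 - C u * X) * d⁄dX R (PowerSeries.mk c) - C u * PowerSeries.mk c := by
    simp only [hC, Derivation.leibniz, smul_eq_mul, map_sub, Derivation.map_one_eq_zero,
      derivative_X, mul_one, derivative_C, mul_zero, add_zero, zero_sub, mul_neg]
    ring
  rw [newtonRecursion_iff] at h ⊢
  rw [hD, hC, hA]
  linear_combination (1 - C u * X) * h + X * PowerSeries.mk c * one_sub_C_mul_X_mul_mk_pow_succ u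

end

theorem Nat.Prime.induction_consecutive {M : ℕ → Prop} (h2 : M 2)
    (hstep : ∀ p q : ℕ, p.Prime → q.Prime → p < q → (∀ r, p < r → r < q → ¬ r.Prime) →
      M p → M q) :
    ∀ q : ℕ, q.Prime → M q := by
  intro q
  induction q using Nat.strong_induction_on with
  | _ q ih =>
    intro hq
    obtain rfl | h2q := hq.two_le.eq_or_lt
    · exact h2
    set p := Nat.findGreatest Nat.Prime (q - 1)
    have hpq : p < q := (Nat.findGreatest_le _).trans_lt (by omega)
    have hp : p.Prime := Nat.findGreatest_spec (m := 2) (by omega) Nat.prime_two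
    exact hstep p q hp hq hpq (fun r hpr hrq => Nat.findGreatest_is_greatest hpr (by omega))
      (ih p hpq hp)

theorem ckq_recursion (c : ℕ → ℝ) (hc0 : c 0 = 1)
    (hc : ∀ k, 1 ≤ k → c k = (1 / (k : ℝ)) * ∑ j ∈ Finset.Icc 2 k, c (k - j) * Zp j)
    (C : ℕ → ℕ → ℝ) (hC2 : ∀ k, C k 2 = c k)
    (hCstep : ∀ p q : ℕ, p.Prime → q.Prime → p < q → (∀ r, p < r → r < q → ¬ r.Prime) →
      C 0 q = 1 ∧ ∀ k, 1 ≤ k → C k q = C k p - (1 / (p : ℝ)) * C (k - 1) p)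
    (A : ℕ → ℕ → ℝ)
    (hA2 : ∀ k, 2 ≤ k → A k 2 = Zp k) (hA12 : A 1 2 = 0)
    (hAstep : ∀ p q : ℕ, p.Prime → q.Prime → p < q → (∀ r, p < r → r < q → ¬ r.Prime) →
      ∀ k, 1 ≤ k → A k q = A k p - 1 / (p : ℝ) ^ k) :
    ∀ q : ℕ, q.Prime → ∀ k : ℕ, 1 ≤ k →
      (k : ℝ) * C k q = ∑ j ∈ Finset.Icc 1 k, C (k - j) q * A j q := by
  have hbase : NewtonRecursion (C · 2) (A · 2) := by
    intro k hk
    dsimp only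
    have hZ : ∀ j ∈ Finset.Icc 2 k, C (k - j) 2 * A j 2 = c (k - j) * Zp j := fun j hj => by
      rw [hC2, hA2 j (Finset.mem_Icc.mp hj).1]
    rw [Finset.Icc_eq_cons_Ioc hk, Finset.sum_cons, hA12, mul_zero, zero_add,
      ← Finset.Icc_add_one_left_eq_Ioc, one_add_one_eq_two, Finset.sum_congr rfl hZ, hC2, hc k hk,
      ← mul_assoc, mul_one_div_cancel (by positivity), one_mul]
  have hall : ∀ q : ℕ, q.Prime → C 0 q = 1 ∧ NewtonRecursion (C · q) (A · q) := by
    refine Nat.Prime.induction_consecutive ⟨by rw [hC2, hc0], hbase⟩ ?_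
    rintro p q hp hq hpq hgap ⟨hp0, hrec⟩
    obtain ⟨hq0, hCq⟩ := hCstep p q hp hq hpq hgap
    refine ⟨hq0, hrec.step (1 / (p : ℝ)) (hq0.trans hp0.symm) hCq fun j hj => ?_⟩
    rw [hAstep p q hp hq hpq hgap j hj, one_div_pow]
  exact fun q hq => (hall q hq).2
end

section
/- For each prime q, the induced sequence c_{k,q} (defined by c_{k,2} = c_k and c_{k,q} = c_{k,p} - p^{-1}c_{k-1,p} for consecutive primes p < q) satisfies c_{k,q} = O_q(q^{-k}) as k → ∞. -/
open Filter Real Asymptotics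
open scoped Classical Topology BigOperators

/-- Recurrence predicate: `(k+1) G (k+1) = ∑_{i ≤ k} V i * G (k-i)`. -/
def RecCKQ (V G : ℕ → ℝ) : Prop :=
  ∀ k : ℕ, ((k : ℝ) + 1) * G (k + 1) = ∑ i ∈ Finset.range (k + 1), V i * G (k - i)

lemma RecCKQ.unique {V G H : ℕ → ℝ} (hG : RecCKQ V G) (hH : RecCKQ V H)
    (h0 : G 0 = H 0) : ∀ k, G k = H k := by
  intro k
  induction k using Nat.strong_induction_on with
  | _ k ih =>
    match k with
    | 0 => exact h0
    | k + 1 =>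
      have h1 : ((k : ℝ) + 1) * G (k + 1) = ((k : ℝ) + 1) * H (k + 1) := by
        rw [hG k, hH k]
        refine Finset.sum_congr rfl fun i hi => ?_
        rw [ih (k - i) (by omega)]
      have h2 : ((k : ℝ) + 1) ≠ 0 := by positivity
      exact mul_left_cancel₀ h2 h1

/-- The canonical solution of the recurrence with value 1 at 0. -/
noncomputable def recSeqCKQ (V : ℕ → ℝ) : ℕ → ℝ
  | 0 => 1
  | (k + 1) => (((k : ℝ) + 1))⁻¹ * ∑ i ∈ Finset.range (k + 1), V i * recSeqCKQ V (k - i)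
  decreasing_by exact Nat.lt_succ_of_le (Nat.sub_le k i)

lemma recSeqCKQ_zero (V : ℕ → ℝ) : recSeqCKQ V 0 = 1 := by simp [recSeqCKQ]

lemma recCKQ_recSeq (V : ℕ → ℝ) : RecCKQ V (recSeqCKQ V) := by
  intro k
  have h2 : ((k : ℝ) + 1) ≠ 0 := by positivity
  rw [show recSeqCKQ V (k+1) = (((k : ℝ) + 1))⁻¹ *
      ∑ i ∈ Finset.range (k + 1), V i * recSeqCKQ V (k - i) from by rw [recSeqCKQ]]
  field_simp

/-- Multiplying the generating function by `(1 - a X)`. -/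
noncomputable def dampenCKQ (a : ℝ) (G : ℕ → ℝ) : ℕ → ℝ :=
  fun k => G k - a * (if k = 0 then 0 else G (k - 1))

lemma dampenCKQ_zero (a : ℝ) (G : ℕ → ℝ) : dampenCKQ a G 0 = G 0 := by
  simp [dampenCKQ]

lemma dampenCKQ_succ (a : ℝ) (G : ℕ → ℝ) (k : ℕ) :
    dampenCKQ a G (k + 1) = G (k + 1) - a * G k := by
  simp [dampenCKQ]

lemma RecCKQ.dampen {V G : ℕ → ℝ} (a : ℝ) (h : RecCKQ V G) :
    RecCKQ (fun i => V i - a ^ (i + 1)) (dampenCKQ a G) := by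
  intro k
  have expand : ∑ i ∈ Finset.range (k + 1), (V i - a ^ (i + 1)) * dampenCKQ a G (k - i)
      = (∑ i ∈ Finset.range (k + 1), V i * dampenCKQ a G (k - i))
        - ∑ i ∈ Finset.range (k + 1), a ^ (i + 1) * dampenCKQ a G (k - i) := by
    rw [← Finset.sum_sub_distrib]
    exact Finset.sum_congr rfl fun i _ => by ring
  have claim1 : ∑ i ∈ Finset.range (k + 1), V i * dampenCKQ a G (k - i)
      = ((k : ℝ) + 1) * G (k + 1) - a * ((k : ℝ) * G k) := by
    have : ∀ i ∈ Finset.range (k + 1), V i * dampenCKQ a G (k - i)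
        = V i * G (k - i) - V i * (a * (if k - i = 0 then 0 else G (k - i - 1))) := by
      intro i _; unfold dampenCKQ; ring
    rw [Finset.sum_congr rfl this, Finset.sum_sub_distrib, ← h k]
    congr 1
    rw [Finset.sum_range_succ]
    have hlast : V k * (a * (if k - k = 0 then 0 else G (k - k - 1))) = 0 := by simp
    rw [hlast, add_zero]
    cases k with
    | zero => simp
    | succ m =>
      have : ∀ i ∈ Finset.range (m + 1), V i * (a * (if m + 1 - i = 0 then 0 else G (m + 1 - i - 1)))
          = a * (V i * G (m - i)) := by
        intro i hi
        have hi' : i ≤ m := by simpa [Nat.lt_succ_iff] using hi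
        have h1 : m + 1 - i ≠ 0 := by omega
        have h2 : m + 1 - i - 1 = m - i := by omega
        rw [if_neg h1, h2]; ring
      rw [Finset.sum_congr rfl this, ← Finset.mul_sum, ← h m]
      push_cast; ring
  have claim2 : ∑ i ∈ Finset.range (k + 1), a ^ (i + 1) * dampenCKQ a G (k - i) = a * G k := by
    have key : ∀ i ∈ Finset.range (k + 1), a ^ (i + 1) * dampenCKQ a G (k - i)
        = (fun i => a ^ (i + 1) * (if i ≤ k then G (k - i) else 0)) i
          - (fun i => a ^ (i + 1) * (if i ≤ k then G (k - i) else 0)) (i + 1) := by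
      intro i hi
      have hik : i ≤ k := by simpa [Nat.lt_succ_iff] using hi
      simp only []
      rw [if_pos hik]
      rcases eq_or_lt_of_le hik with rfl | hlt
      · rw [if_neg (by omega)]
        simp [dampenCKQ]
      · rw [if_pos (by omega : i + 1 ≤ k)]
        have h1 : k - i ≠ 0 := by omega
        have h2 : k - (i + 1) = k - i - 1 := by omega
        unfold dampenCKQ
        rw [if_neg h1, h2]; ring
    rw [Finset.sum_congr rfl key, Finset.sum_range_sub']
    simp
  rw [expand, claim1, claim2, dampenCKQ_succ]
  ring

/-- Polynomial growth bound for solutions with summably-weighted coefficients. -/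
lemma polyBoundCKQ {v e : ℕ → ℝ} (r : ℝ) (hr : 0 < r)
    (hrec : RecCKQ v e) (he0 : e 0 = 1) (D : ℕ)
    (hv : ∀ n, ∑ i ∈ Finset.range n, |v i| * r ^ (i + 1) ≤ (D : ℝ)) :
    ∀ m, |e m| * r ^ m ≤ ((m : ℝ) + 1) ^ D := by
  intro m
  induction m using Nat.strong_induction_on with
  | _ m ih =>
    match m with
    | 0 => simp [he0]
    | k + 1 =>
      have hstep : ((k : ℝ) + 1) * (|e (k + 1)| * r ^ (k + 1))
          ≤ (D : ℝ) * ((k : ℝ) + 1) ^ D := by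
        have h1 : ((k : ℝ) + 1) * (|e (k + 1)| * r ^ (k + 1))
            = |((k : ℝ) + 1) * e (k + 1)| * r ^ (k + 1) := by
          rw [abs_mul]
          rw [abs_of_nonneg (by positivity : (0:ℝ) ≤ (k : ℝ) + 1)]
          ring
        rw [h1, hrec k]
        calc |∑ i ∈ Finset.range (k + 1), v i * e (k - i)| * r ^ (k + 1)
            ≤ (∑ i ∈ Finset.range (k + 1), |v i * e (k - i)|) * r ^ (k + 1) := by
              apply mul_le_mul_of_nonneg_right (Finset.abs_sum_le_sum_abs _ _) (by positivity)
          _ = ∑ i ∈ Finset.range (k + 1), (|v i| * r ^ (i + 1)) * (|e (k - i)| * r ^ (k - i)) := by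
              rw [Finset.sum_mul]
              refine Finset.sum_congr rfl fun i hi => ?_
              have hik : i ≤ k := by simpa [Nat.lt_succ_iff] using hi
              have : r ^ (k + 1) = r ^ (i + 1) * r ^ (k - i) := by
                rw [← pow_add]; congr 1; omega
              rw [this, abs_mul]; ring
          _ ≤ ∑ i ∈ Finset.range (k + 1), (|v i| * r ^ (i + 1)) * ((k : ℝ) + 1) ^ D := by
              refine Finset.sum_le_sum fun i hi => ?_
              have hik : i ≤ k := by simpa [Nat.lt_succ_iff] using hi
              refine mul_le_mul_of_nonneg_left ?_ (by positivity)
              calc |e (k - i)| * r ^ (k - i) ≤ ((k - i : ℕ) + 1 : ℝ) ^ D :=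
                    ih (k - i) (by omega)
                _ ≤ ((k : ℝ) + 1) ^ D := by
                    apply pow_le_pow_left₀ (by positivity)
                    have : ((k - i : ℕ) : ℝ) ≤ (k : ℝ) := by exact_mod_cast Nat.sub_le k i
                    linarith
          _ = (∑ i ∈ Finset.range (k + 1), |v i| * r ^ (i + 1)) * ((k : ℝ) + 1) ^ D := by
              rw [Finset.sum_mul]
          _ ≤ (D : ℝ) * ((k : ℝ) + 1) ^ D := by
              apply mul_le_mul_of_nonneg_right (hv (k + 1)) (by positivity)
      -- now D (k+1)^D ≤ (k+1) (k+2)^D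
      have hber : (D : ℝ) * ((k : ℝ) + 1) ^ D ≤ ((k : ℝ) + 1) * ((k : ℝ) + 1 + 1) ^ D := by
        have hk1 : (0:ℝ) < (k : ℝ) + 1 := by positivity
        have hb : 1 + (D : ℝ) * (1 / ((k:ℝ)+1)) ≤ (1 + 1 / ((k:ℝ)+1)) ^ D := by
          apply one_add_mul_le_pow
          have : (0:ℝ) ≤ 1 / ((k:ℝ)+1) := by positivity
          linarith
        have hb2 : (D : ℝ) / ((k:ℝ)+1) ≤ (1 + 1 / ((k:ℝ)+1)) ^ D := by
          have : (0:ℝ) ≤ 1 := zero_le_one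
          calc (D : ℝ) / ((k:ℝ)+1) = (D : ℝ) * (1 / ((k:ℝ)+1)) := by ring
            _ ≤ 1 + (D : ℝ) * (1 / ((k:ℝ)+1)) := by linarith [hb, (by positivity : (0:ℝ) ≤ (D:ℝ) * (1/((k:ℝ)+1)))]
            _ ≤ _ := hb
        have key : ((k:ℝ)+1) * ((1 + 1 / ((k:ℝ)+1)) ^ D * ((k:ℝ)+1) ^ D) = ((k:ℝ)+1) * ((k:ℝ)+1+1) ^ D := by
          rw [← mul_pow]
          congr 2
          field_simp
        calc (D : ℝ) * ((k : ℝ) + 1) ^ D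
            = ((D : ℝ) / ((k:ℝ)+1)) * ((k:ℝ)+1) * ((k:ℝ)+1) ^ D := by field_simp
          _ ≤ ((1 + 1 / ((k:ℝ)+1)) ^ D) * ((k:ℝ)+1) * ((k:ℝ)+1) ^ D := by
              apply mul_le_mul_of_nonneg_right (mul_le_mul_of_nonneg_right hb2 (le_of_lt hk1)) (by positivity)
          _ = ((k:ℝ)+1) * ((1 + 1 / ((k:ℝ)+1)) ^ D * ((k:ℝ)+1) ^ D) := by ring
          _ = _ := key
      have hk1 : (0:ℝ) < (k : ℝ) + 1 := by positivity
      have := le_trans hstep hber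
      have hfin : |e (k + 1)| * r ^ (k + 1) ≤ ((k : ℝ) + 1 + 1) ^ D := by
        nlinarith [pow_nonneg (le_of_lt hr) (k+1), abs_nonneg (e (k+1))]
      convert hfin using 2
      push_cast; ring


-- indicator sequence
noncomputable def gseq (j : ℕ) : ℕ → ℝ := fun n => if n.Prime then 1 / (n : ℝ) ^ j else 0

lemma gseq_nonneg (j n : ℕ) : 0 ≤ gseq j n := by
  unfold gseq; split <;> positivity

lemma summable_gseq {j : ℕ} (hj : 2 ≤ j) : Summable (gseq j) := by
  refine Summable.of_nonneg_of_le (gseq_nonneg j) ?_ (Real.summable_one_div_nat_pow.mpr one_lt_two)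
  · intro n
    unfold gseq
    split
    · rename_i hp
      have h2 : (2 : ℝ) ≤ (n : ℝ) := by exact_mod_cast hp.two_le
      have h1 : (1 : ℝ) ≤ (n : ℝ) := by linarith
      rw [div_le_div_iff₀ (by positivity) (by positivity), one_mul, one_mul]
      exact pow_le_pow_right₀ h1 hj
    · positivity

lemma Zp_eq_tsum_gseq (j : ℕ) : Zp j = ∑' n : ℕ, gseq j n := by
  have h := tsum_subtype {p : ℕ | p.Prime} (fun n => 1 / (n : ℝ) ^ j)
  have h2 : Zp j = ∑' (x : ↑{p : ℕ | p.Prime}), (1 : ℝ) / ((x : ℕ) : ℝ) ^ j := rfl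
  rw [h2, h]
  apply tsum_congr
  intro n
  by_cases hp : n.Prime <;> simp [Set.indicator, gseq, hp]

lemma sum_basel : ∀ N : ℕ, ∑ n ∈ Finset.range N, (1 : ℝ) / ((n : ℝ) + 1) ^ 2 ≤ 2 - 2 / ((N : ℝ) + 1) := by
  intro N
  induction N with
  | zero => norm_num
  | succ N ih =>
    rw [Finset.sum_range_succ]
    have hN : (0 : ℝ) < (N : ℝ) + 1 := by positivity
    have hN2 : (0 : ℝ) < (N : ℝ) + 2 := by positivity
    have key : 1 / ((N : ℝ) + 1) ^ 2 ≤ 2 / ((N : ℝ) + 1) - 2 / ((N : ℝ) + 2) := by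
      rw [div_sub_div _ _ (ne_of_gt hN) (ne_of_gt hN2), div_le_div_iff₀ (by positivity) (by positivity)]
      ring_nf
      nlinarith [sq_nonneg ((N:ℝ)+1)]
    push_cast
    have hcast : ((N : ℝ) + 1 + 1) = (N : ℝ) + 2 := by ring
    rw [hcast]
    linarith [ih]

lemma summable_shift_sq : Summable (fun n : ℕ => (1 : ℝ) / ((n : ℝ) + 1) ^ 2) := by
  have h : Summable (fun n : ℕ => 1 / ((n : ℕ) : ℝ) ^ 2) := Real.summable_one_div_nat_pow.mpr one_lt_two
  have := (summable_nat_add_iff 1).mpr h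
  apply this.congr
  intro n; push_cast; ring_nf

lemma tsum_basel : ∑' n : ℕ, (1 : ℝ) / ((n : ℝ) + 1) ^ 2 ≤ 2 := by
  apply Summable.tsum_le_of_sum_range_le summable_shift_sq
  intro n
  refine le_trans (sum_basel n) ?_
  have : (0:ℝ) < (n:ℝ) + 1 := by positivity
  have : (0:ℝ) ≤ 2 / ((n : ℝ) + 1) := by positivity
  linarith

/-- Tail bound: for `j ≥ 2` and `1 ≤ Q`,
`0 ≤ Zp j - ∑_{p < Q prime} p⁻ʲ ≤ 2 Q² (Q⁻¹)ʲ`. -/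
lemma Zp_tail_bound {j Q : ℕ} (hj : 2 ≤ j) (hQ : 1 ≤ Q) :
    0 ≤ Zp j - ∑ p ∈ (Finset.range Q).filter Nat.Prime, ((p : ℝ)⁻¹) ^ j ∧
    Zp j - ∑ p ∈ (Finset.range Q).filter Nat.Prime, ((p : ℝ)⁻¹) ^ j
      ≤ 2 * (Q : ℝ) ^ 2 * ((Q : ℝ)⁻¹) ^ j := by
  have hsum := summable_gseq hj
  have hsplit := Summable.sum_add_tsum_nat_add (f := gseq j) Q hsum
  have hfin : ∑ i ∈ Finset.range Q, gseq j i
      = ∑ p ∈ (Finset.range Q).filter Nat.Prime, ((p : ℝ)⁻¹) ^ j := by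
    rw [Finset.sum_filter]
    refine Finset.sum_congr rfl fun i _ => ?_
    unfold gseq
    split <;> simp [one_div, inv_pow]
  have htail : Zp j - ∑ p ∈ (Finset.range Q).filter Nat.Prime, ((p : ℝ)⁻¹) ^ j
      = ∑' n : ℕ, gseq j (n + Q) := by
    rw [Zp_eq_tsum_gseq, ← hsplit, hfin]; ring
  constructor
  · rw [htail]; exact tsum_nonneg (fun n => gseq_nonneg j _)
  · rw [htail]
    have hQR : (0 : ℝ) < (Q : ℝ) := by exact_mod_cast hQ
    have hterm : ∀ n : ℕ, gseq j (n + Q) ≤ ((Q:ℝ)⁻¹) ^ (j - 2) * (1 / ((n : ℝ) + 1) ^ 2) := by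
      intro n
      unfold gseq
      split
      · rename_i hp
        have hge : (Q : ℝ) ≤ ((n + Q : ℕ) : ℝ) := by exact_mod_cast Nat.le_add_left Q n
        have hgen : ((n : ℝ) + 1) ≤ ((n + Q : ℕ) : ℝ) := by
          push_cast; have : (1:ℝ) ≤ (Q:ℝ) := by exact_mod_cast hQ
          linarith
        have hpos : (0:ℝ) < ((n + Q : ℕ) : ℝ) := lt_of_lt_of_le hQR hge
        have hsplitpow : ((n + Q : ℕ) : ℝ) ^ j = ((n + Q : ℕ) : ℝ) ^ (j - 2) * ((n + Q : ℕ) : ℝ) ^ 2 := by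
          rw [← pow_add]; congr 1; omega
        have hrhs : ((Q:ℝ)⁻¹) ^ (j - 2) * (1 / ((n : ℝ) + 1) ^ 2)
            = 1 / ((Q:ℝ) ^ (j - 2) * ((n : ℝ) + 1) ^ 2) := by
          rw [inv_pow, one_div, one_div, ← mul_inv]
        rw [hrhs, hsplitpow]
        apply one_div_le_one_div_of_le (by positivity)
        apply mul_le_mul
        · exact pow_le_pow_left₀ (by positivity) hge _
        · exact pow_le_pow_left₀ (by positivity) hgen _
        · positivity
        · positivity
      · positivity
    calc ∑' n : ℕ, gseq j (n + Q)
        ≤ ∑' n : ℕ, ((Q:ℝ)⁻¹) ^ (j - 2) * (1 / ((n : ℝ) + 1) ^ 2) := by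
          apply Summable.tsum_le_tsum hterm ((summable_nat_add_iff Q).mpr hsum)
          exact Summable.mul_left _ summable_shift_sq
      _ = ((Q:ℝ)⁻¹) ^ (j - 2) * ∑' n : ℕ, (1 / ((n : ℝ) + 1) ^ 2) := Summable.tsum_mul_left _ summable_shift_sq
      _ ≤ ((Q:ℝ)⁻¹) ^ (j - 2) * 2 := by
          apply mul_le_mul_of_nonneg_left tsum_basel (by positivity)
      _ = 2 * (Q : ℝ) ^ 2 * ((Q : ℝ)⁻¹) ^ j := by
          have hQne : (Q:ℝ) ≠ 0 := ne_of_gt hQR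
          have h2 : ((Q:ℝ)⁻¹) ^ j = ((Q:ℝ)⁻¹) ^ (j - 2) * ((Q:ℝ)⁻¹) ^ 2 := by
            rw [← pow_add]; congr 1; omega
          rw [h2]
          field_simp

noncomputable def VseqCKQ (q i : ℕ) : ℝ :=
  (if 2 ≤ i + 1 then Zp (i + 1) else 0)
    - ∑ p ∈ (Finset.range q).filter Nat.Prime, ((p : ℝ)⁻¹) ^ (i + 1)

noncomputable def wseqCKQ (q i : ℕ) : ℝ := VseqCKQ q i - ((q : ℝ)⁻¹) ^ (i + 1)

lemma filter_prime_insert {q : ℕ} (hq : q.Prime) :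
    (Finset.range (q + 1)).filter Nat.Prime = insert q ((Finset.range q).filter Nat.Prime) := by
  ext r
  simp only [Finset.mem_filter, Finset.mem_range, Finset.mem_insert]
  constructor
  · rintro ⟨hr, hpr⟩
    rcases lt_or_eq_of_le (Nat.lt_succ_iff.mp hr) with h | h
    · exact Or.inr ⟨h, hpr⟩
    · exact Or.inl h
  · rintro (h | ⟨h1, h2⟩)
    · subst h; exact ⟨Nat.lt_succ_self _, hq⟩
    · exact ⟨by omega, h2⟩

lemma q_notMem_filter (q : ℕ) : q ∉ (Finset.range q).filter Nat.Prime := by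
  simp [Finset.mem_filter]

lemma wseqCKQ_eq {q : ℕ} (hq : q.Prime) (i : ℕ) :
    wseqCKQ q i = (if 2 ≤ i + 1 then Zp (i + 1) else 0)
      - ∑ p ∈ (Finset.range (q + 1)).filter Nat.Prime, ((p : ℝ)⁻¹) ^ (i + 1) := by
  unfold wseqCKQ VseqCKQ
  rw [filter_prime_insert hq, Finset.sum_insert (q_notMem_filter q)]
  ring

lemma geo_sum_le {x : ℝ} (h0 : 0 ≤ x) (h1 : x < 1) (m : ℕ) :
    ∑ i ∈ Finset.range m, x ^ i ≤ (1 - x)⁻¹ := by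
  have hx : (0:ℝ) < 1 - x := by linarith
  rw [geom_sum_eq (ne_of_lt h1) m, div_le_iff_of_neg (by linarith : x - 1 < 0)]
  have h2 : (1 - x)⁻¹ * (x - 1) = -((1 - x)⁻¹ * (1 - x)) := by ring
  rw [h2, inv_mul_cancel₀ (ne_of_gt hx)]
  nlinarith [pow_nonneg h0 m]

lemma wseq_abs_bound_pos {q : ℕ} (hq : q.Prime) {i : ℕ} (hi : 1 ≤ i) :
    |wseqCKQ q i| ≤ 2 * ((q : ℝ) + 1) ^ 2 * (((q : ℝ) + 1)⁻¹) ^ (i + 1) := by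
  have h := Zp_tail_bound (j := i + 1) (Q := q + 1) (by omega) (by omega)
  rw [wseqCKQ_eq hq, if_pos (by omega : 2 ≤ i + 1)]
  push_cast at h
  rw [abs_of_nonneg h.1]
  exact h.2

lemma wseq_abs_bound_zero {q : ℕ} (hq : q.Prime) :
    |wseqCKQ q 0| ≤ (q : ℝ) + 1 := by
  rw [wseqCKQ_eq hq, if_neg (by omega : ¬ 2 ≤ 0 + 1), zero_sub, abs_neg,
    abs_of_nonneg (Finset.sum_nonneg fun p _ => by positivity)]
  calc ∑ p ∈ (Finset.range (q + 1)).filter Nat.Prime, ((p : ℝ)⁻¹) ^ (0 + 1)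
      ≤ ∑ _p ∈ (Finset.range (q + 1)).filter Nat.Prime, (1 : ℝ) := by
        refine Finset.sum_le_sum fun p hp => ?_
        have hpp : p.Prime := (Finset.mem_filter.mp hp).2
        have h1 : (1 : ℝ) ≤ (p : ℝ) := by exact_mod_cast hpp.one_lt.le
        rw [pow_one]
        exact inv_le_one_of_one_le₀ h1
    _ = ((Finset.range (q + 1)).filter Nat.Prime).card := by rw [Finset.sum_const, nsmul_eq_mul, mul_one]
    _ ≤ ((q : ℝ) + 1) := by
        have := Finset.card_filter_le (Finset.range (q + 1)) Nat.Prime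
        rw [Finset.card_range] at this
        exact_mod_cast this

lemma wsum_bound {q : ℕ} (hq : q.Prime) :
    ∀ n, ∑ i ∈ Finset.range n, |wseqCKQ q i| * ((q : ℝ) + 1/2) ^ (i + 1)
      ≤ (((q + 1) ^ 2 + 4 * (q + 1) ^ 3 : ℕ) : ℝ) := by
  intro n
  have hq2 : (2 : ℝ) ≤ (q : ℝ) := by exact_mod_cast hq.two_le
  set r : ℝ := (q : ℝ) + 1/2 with hr_def
  set Q : ℝ := (q : ℝ) + 1 with hQ_def
  have hr0 : 0 < r := by rw [hr_def]; linarith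
  have hQ0 : 0 < Q := by rw [hQ_def]; linarith
  have hrQ : r < Q := by rw [hr_def, hQ_def]; linarith
  set x : ℝ := r / Q with hx_def
  have hx0 : 0 ≤ x := by positivity
  have hx1 : x < 1 := (div_lt_one hQ0).mpr hrQ
  have hRHS : (((q + 1) ^ 2 + 4 * (q + 1) ^ 3 : ℕ) : ℝ) = Q ^ 2 + 4 * Q ^ 3 := by
    rw [hQ_def]; push_cast; ring
  rw [hRHS]
  cases n with
  | zero => simp; positivity
  | succ m =>
    rw [Finset.sum_range_succ']
    have h0 : |wseqCKQ q 0| * r ^ (0 + 1) ≤ Q ^ 2 := by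
      rw [pow_one]
      calc |wseqCKQ q 0| * r ≤ Q * Q := by
            apply mul_le_mul (wseq_abs_bound_zero hq) (le_of_lt hrQ) (le_of_lt hr0) (le_of_lt hQ0)
        _ = Q ^ 2 := by ring
    have hrest : ∑ i ∈ Finset.range m, |wseqCKQ q (i + 1)| * r ^ (i + 1 + 1)
        ≤ 4 * Q ^ 3 := by
      have hterm : ∀ i ∈ Finset.range m, |wseqCKQ q (i + 1)| * r ^ (i + 1 + 1)
          ≤ 2 * Q ^ 2 * x ^ i := by
        intro i _
        calc |wseqCKQ q (i + 1)| * r ^ (i + 2)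
            ≤ (2 * Q ^ 2 * (Q⁻¹) ^ (i + 2)) * r ^ (i + 2) := by
              apply mul_le_mul_of_nonneg_right (wseq_abs_bound_pos hq (by omega)) (by positivity)
          _ = 2 * Q ^ 2 * x ^ (i + 2) := by
              rw [hx_def, div_pow, div_eq_mul_inv, inv_pow]; ring
          _ ≤ 2 * Q ^ 2 * x ^ i := by
              apply mul_le_mul_of_nonneg_left _ (by positivity)
              exact pow_le_pow_of_le_one hx0 (le_of_lt hx1) (by omega)
      calc ∑ i ∈ Finset.range m, |wseqCKQ q (i + 1)| * r ^ (i + 1 + 1)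
          ≤ ∑ i ∈ Finset.range m, 2 * Q ^ 2 * x ^ i := Finset.sum_le_sum hterm
        _ = 2 * Q ^ 2 * ∑ i ∈ Finset.range m, x ^ i := by rw [Finset.mul_sum]
        _ ≤ 2 * Q ^ 2 * (1 - x)⁻¹ := by
            apply mul_le_mul_of_nonneg_left (geo_sum_le hx0 hx1 m) (by positivity)
        _ = 4 * Q ^ 3 := by
            have h1x : 1 - x = (2 * Q)⁻¹ := by
              rw [hx_def, hr_def, hQ_def]
              field_simp
              ring
            rw [h1x, inv_inv]; ring
    linarith

theorem ckq_bound (c : ℕ → ℝ) (hc0 : c 0 = 1)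
    (hc : ∀ k, 1 ≤ k → c k = (1 / (k : ℝ)) * ∑ j ∈ Finset.Icc 2 k, c (k - j) * Zp j)
    (C : ℕ → ℕ → ℝ) (hC2 : ∀ k, C k 2 = c k)
    (hCstep : ∀ p q : ℕ, p.Prime → q.Prime → p < q → (∀ r, p < r → r < q → ¬ r.Prime) →
      C 0 q = 1 ∧ ∀ k, 1 ≤ k → C k q = C k p - (1 / (p : ℝ)) * C (k - 1) p) :
    ∀ q : ℕ, q.Prime → (fun k : ℕ => C k q) =O[atTop] fun k : ℕ => ((q : ℝ) ^ k)⁻¹ := by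
  -- the base recurrence for `c`
  have hbase : RecCKQ (VseqCKQ 2) c := by
    intro k
    have hc' := hc (k + 1) (by omega)
    have hne : ((k : ℝ) + 1) ≠ 0 := by positivity
    have hmul : ((k : ℝ) + 1) * c (k + 1) = ∑ j ∈ Finset.Icc 2 (k + 1), c (k + 1 - j) * Zp j := by
      rw [hc']
      push_cast
      field_simp
    rw [hmul]
    have hempty : (Finset.range 2).filter Nat.Prime = ∅ := by decide
    calc ∑ j ∈ Finset.Icc 2 (k + 1), c (k + 1 - j) * Zp j
        = ∑ i ∈ Finset.Icc 1 k, c (k - i) * Zp (i + 1) := by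
          rw [show Finset.Icc 2 (k + 1) = Finset.map (addRightEmbedding 1) (Finset.Icc 1 k) by
            rw [Finset.map_add_right_Icc]]
          rw [Finset.sum_map]
          refine Finset.sum_congr rfl fun i _ => ?_
          rw [addRightEmbedding_apply, show k + 1 - (i + 1) = k - i from by omega]
      _ = ∑ i ∈ (Finset.range (k + 1)).filter (fun i => 2 ≤ i + 1), Zp (i + 1) * c (k - i) := by
          rw [show (Finset.range (k + 1)).filter (fun i => 2 ≤ i + 1) = Finset.Icc 1 k by
            ext i
            simp only [Finset.mem_filter, Finset.mem_range, Finset.mem_Icc]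
            omega]
          exact Finset.sum_congr rfl fun i _ => by ring
      _ = ∑ i ∈ Finset.range (k + 1), VseqCKQ 2 i * c (k - i) := by
          rw [Finset.sum_filter]
          refine Finset.sum_congr rfl fun i _ => ?_
          unfold VseqCKQ
          rw [hempty]
          simp only [Finset.sum_empty, sub_zero, ite_mul, zero_mul]
  -- the recurrence for every prime
  have hmain : ∀ q : ℕ, q.Prime → C 0 q = 1 ∧ RecCKQ (VseqCKQ q) (fun k => C k q) := by
    intro q
    induction q using Nat.strong_induction_on with
    | _ q ih =>
      intro hq
      by_cases h2 : q = 2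
      · subst h2
        refine ⟨by rw [hC2 0, hc0], ?_⟩
        have : (fun k => C k 2) = c := funext hC2
        rw [this]
        exact hbase
      · have hq2 : 2 < q := lt_of_le_of_ne hq.two_le (Ne.symm h2)
        have hne : ((Finset.range q).filter Nat.Prime).Nonempty :=
          ⟨2, Finset.mem_filter.mpr ⟨Finset.mem_range.mpr hq2, Nat.prime_two⟩⟩
        set p := ((Finset.range q).filter Nat.Prime).max' hne with hp_def
        have hpmem := Finset.max'_mem ((Finset.range q).filter Nat.Prime) hne
        have hpp : p.Prime := (Finset.mem_filter.mp hpmem).2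
        have hpq : p < q := Finset.mem_range.mp (Finset.mem_filter.mp hpmem).1
        have hbet : ∀ r, p < r → r < q → ¬ r.Prime := by
          intro r h1 h2' hr
          have hmem : r ∈ (Finset.range q).filter Nat.Prime :=
            Finset.mem_filter.mpr ⟨Finset.mem_range.mpr h2', hr⟩
          have := Finset.le_max' _ r hmem
          omega
        obtain ⟨h0q, hstep⟩ := hCstep p q hpp hq hpq hbet
        obtain ⟨h0p, hrecp⟩ := ih p hpq hpp
        have hVq : (fun i => VseqCKQ p i - ((p : ℝ)⁻¹) ^ (i + 1)) = VseqCKQ q := by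
          funext i
          unfold VseqCKQ
          have hset : (Finset.range q).filter Nat.Prime
              = insert p ((Finset.range p).filter Nat.Prime) := by
            ext r
            simp only [Finset.mem_filter, Finset.mem_range, Finset.mem_insert]
            constructor
            · rintro ⟨hr, hpr⟩
              by_cases hrp : r = p
              · exact Or.inl hrp
              · rcases lt_or_gt_of_ne hrp with h | h
                · exact Or.inr ⟨h, hpr⟩
                · exact absurd hpr (hbet r h hr)
            · rintro (h | ⟨ha, hb⟩)
              · subst h; exact ⟨hpq, hpp⟩
              · exact ⟨by omega, hb⟩
          rw [hset, Finset.sum_insert (q_notMem_filter p)]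
          ring
        have hfun : (dampenCKQ ((p : ℝ))⁻¹ (fun k => C k p)) = fun k => C k q := by
          funext k
          cases k with
          | zero =>
            rw [dampenCKQ_zero]
            show C 0 p = C 0 q
            rw [h0p, h0q]
          | succ m =>
            rw [dampenCKQ_succ]
            have hs := hstep (m + 1) (by omega)
            show C (m + 1) p - (p:ℝ)⁻¹ * C m p = C (m + 1) q
            rw [hs]
            norm_num
        refine ⟨h0q, ?_⟩
        have hd := hrecp.dampen ((p : ℝ)⁻¹)
        rw [hVq, hfun] at hd
        exact hd
  -- main estimate
  intro q hq
  obtain ⟨h0, hrec⟩ := hmain q hq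
  have hq2 : (2 : ℝ) ≤ (q : ℝ) := by exact_mod_cast hq.two_le
  have hqpos : (0 : ℝ) < (q : ℝ) := by linarith
  set e := recSeqCKQ (wseqCKQ q) with he_def
  have hrece : RecCKQ (wseqCKQ q) e := recCKQ_recSeq _
  have hdampC : RecCKQ (wseqCKQ q) (dampenCKQ ((q : ℝ)⁻¹) (fun k => C k q)) := by
    have hd := hrec.dampen ((q : ℝ)⁻¹)
    have hw : (fun i => VseqCKQ q i - ((q : ℝ)⁻¹) ^ (i + 1)) = wseqCKQ q := rfl
    rw [hw] at hd
    exact hd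
  have hde : ∀ k, dampenCKQ ((q : ℝ)⁻¹) (fun k => C k q) k = e k := by
    refine RecCKQ.unique hdampC hrece ?_
    rw [dampenCKQ_zero]
    show C 0 q = e 0
    rw [h0, he_def, recSeqCKQ_zero]
  set r : ℝ := (q : ℝ) + 1/2 with hr_def
  have hr : 0 < r := by rw [hr_def]; linarith
  set D : ℕ := (q + 1) ^ 2 + 4 * (q + 1) ^ 3 with hD_def
  have hpoly : ∀ m, |e m| * r ^ m ≤ ((m : ℝ) + 1) ^ D :=
    polyBoundCKQ r hr hrece (recSeqCKQ_zero _) D (wsum_bound hq)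
  -- |C k q| bounded by the damped sums
  have hCe : ∀ k, |C k q| ≤ ∑ m ∈ Finset.range (k + 1), ((q : ℝ)⁻¹) ^ (k - m) * |e m| := by
    intro k
    induction k with
    | zero =>
      have h00' := hde 0
      rw [dampenCKQ_zero] at h00'
      have h00 : C 0 q = e 0 := h00'
      have hsum1 : ∑ m ∈ Finset.range (0 + 1), ((q : ℝ)⁻¹) ^ (0 - m) * |e m| = |e 0| := by
        simp
      rw [hsum1, h00]
    | succ k ihk =>
      have hk1 := hde (k + 1)
      rw [dampenCKQ_succ] at hk1
      have hCk : C (k + 1) q = e (k + 1) + (q : ℝ)⁻¹ * C k q := by linarith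
      rw [hCk]
      have hqinv : (0 : ℝ) ≤ (q : ℝ)⁻¹ := by positivity
      calc |e (k + 1) + (q : ℝ)⁻¹ * C k q| ≤ |e (k + 1)| + (q : ℝ)⁻¹ * |C k q| := by
            have habs := abs_add_le (e (k + 1)) ((q : ℝ)⁻¹ * C k q)
            rw [abs_mul, abs_of_nonneg hqinv] at habs
            exact habs
        _ ≤ |e (k + 1)| + (q : ℝ)⁻¹ * ∑ m ∈ Finset.range (k + 1), ((q : ℝ)⁻¹) ^ (k - m) * |e m| := by
            have := mul_le_mul_of_nonneg_left ihk hqinv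
            linarith
        _ = ∑ m ∈ Finset.range (k + 1 + 1), ((q : ℝ)⁻¹) ^ (k + 1 - m) * |e m| := by
            rw [Finset.sum_range_succ _ (k + 1), Finset.mul_sum]
            have hcong : ∀ m ∈ Finset.range (k + 1),
                (q : ℝ)⁻¹ * (((q : ℝ)⁻¹) ^ (k - m) * |e m|)
                  = ((q : ℝ)⁻¹) ^ (k + 1 - m) * |e m| := by
              intro m hm
              have hmk : m ≤ k := by simpa [Nat.lt_succ_iff] using hm
              rw [show k + 1 - m = (k - m) + 1 by omega, pow_succ']
              ring
            rw [Finset.sum_congr rfl hcong, Nat.sub_self, pow_zero, one_mul]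
            ring
  -- summability of the comparison series
  set x : ℝ := (q : ℝ) / r with hx_def
  have hx0 : 0 ≤ x := by positivity
  have hx1 : x < 1 := by
    rw [hx_def]
    rw [div_lt_one hr, hr_def]
    linarith
  have hsumm : Summable (fun m : ℕ => ((m : ℝ) + 1) ^ D * x ^ m) := by
    have h1 : Summable (fun n : ℕ => (n : ℝ) ^ D * x ^ n) :=
      summable_pow_mul_geometric_of_norm_lt_one D (by rwa [Real.norm_eq_abs, abs_of_nonneg hx0])
    have h2 : Summable (fun n : ℕ => ((n + 1 : ℕ) : ℝ) ^ D * x ^ (n + 1)) :=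
      (summable_nat_add_iff (f := fun n : ℕ => (n : ℝ) ^ D * x ^ n) 1).mpr h1
    have hxne : x ≠ 0 ∨ True := Or.inr trivial
    rcases eq_or_ne x 0 with hx | hx
    · apply summable_of_ne_finset_zero (s := {0})
      intro m hm
      have : m ≠ 0 := by simpa using hm
      rw [hx, zero_pow this, mul_zero]
    · have := h2.mul_right x⁻¹
      apply this.congr
      intro n
      push_cast
      field_simp
      ring
  set S : ℝ := ∑' m : ℕ, ((m : ℝ) + 1) ^ D * x ^ m with hS_def
  have hfinal : ∀ k, |C k q| ≤ S * ((q : ℝ) ^ k)⁻¹ := by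
    intro k
    refine le_trans (hCe k) ?_
    have hterm : ∀ m ∈ Finset.range (k + 1),
        ((q : ℝ)⁻¹) ^ (k - m) * |e m| ≤ ((q : ℝ) ^ k)⁻¹ * (((m : ℝ) + 1) ^ D * x ^ m) := by
      intro m hm
      have hmk : m ≤ k := by simpa [Nat.lt_succ_iff] using hm
      have hqne : (q : ℝ)⁻¹ ≠ 0 := by positivity
      have h1 : ((q : ℝ)⁻¹) ^ (k - m) = ((q : ℝ)⁻¹) ^ k * (((q : ℝ)⁻¹) ^ m)⁻¹ :=
        pow_sub₀ _ hqne hmk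
      have he' : |e m| ≤ ((m : ℝ) + 1) ^ D * (r ^ m)⁻¹ := by
        have hp := hpoly m
        have hrm : (0 : ℝ) < r ^ m := by positivity
        rw [← le_div_iff₀ hrm] at hp
        rwa [div_eq_mul_inv] at hp
      calc ((q : ℝ)⁻¹) ^ (k - m) * |e m|
          ≤ ((q : ℝ)⁻¹) ^ (k - m) * (((m : ℝ) + 1) ^ D * (r ^ m)⁻¹) := by
            apply mul_le_mul_of_nonneg_left he' (by positivity)
        _ = ((q : ℝ) ^ k)⁻¹ * (((m : ℝ) + 1) ^ D * x ^ m) := by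
            rw [h1, inv_pow, inv_pow, inv_inv, hx_def, div_pow, div_eq_mul_inv]
            ring
    calc ∑ m ∈ Finset.range (k + 1), ((q : ℝ)⁻¹) ^ (k - m) * |e m|
        ≤ ∑ m ∈ Finset.range (k + 1), ((q : ℝ) ^ k)⁻¹ * (((m : ℝ) + 1) ^ D * x ^ m) :=
          Finset.sum_le_sum hterm
      _ = ((q : ℝ) ^ k)⁻¹ * ∑ m ∈ Finset.range (k + 1), ((m : ℝ) + 1) ^ D * x ^ m := by
          rw [Finset.mul_sum]
      _ ≤ ((q : ℝ) ^ k)⁻¹ * S := by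
          apply mul_le_mul_of_nonneg_left _ (by positivity)
          exact Summable.sum_le_tsum _ (fun m _ => by positivity) hsumm
      _ = S * ((q : ℝ) ^ k)⁻¹ := by ring
  rw [isBigO_iff]
  refine ⟨S, Filter.Eventually.of_forall fun k => ?_⟩
  rw [Real.norm_eq_abs, Real.norm_eq_abs, abs_of_nonneg (by positivity : (0:ℝ) ≤ ((q : ℝ) ^ k)⁻¹)]
  exact hfinal k
end
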